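/- arXiv:1103.3224 — 4 statements merged into one kernel-verified Lean document; each statement's English description precedes it below -/
import Mathlib

section
/- Let K be a positive integer and N = 4K+1. If p_1, p_2 are nonnegative integers and q_1, q_2 are positive integers with p_1+p_2 = 2K, q_1+q_2 = 2N, and p_j/q_j ≥ K/N for j = 1,2, then p_1 = p_2 = K and q_1 = q_2 = N. -/
/-! Clearing denominators, each hypothesis reads `K q_j ≤ p_j N`; these two inequalities sum to
the identity `K (q₁ + q₂) = 2KN = (p₁ + p₂) N`, so both are equalities. As `N = 4K + 1` is
coprime to `K`, `K q_j = p_j N` forces `N ∣ q_j`, and `0 < q_j < 2N` then gives `q_j = N`. -/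

theorem Nat.mul_le_mul_of_cast_div_le_div {a b c d : ℕ} (hb : 0 < b) (hd : 0 < d)
    (h : (a : ℝ) / b ≤ c / d) : a * d ≤ c * b := by
  rw [div_le_div_iff₀ (by exact_mod_cast hb) (by exact_mod_cast hd)] at h
  exact_mod_cast h

theorem Nat.coprime_mul_add_one_left (n K : ℕ) : Nat.Coprime (n * K + 1) K := by
  rw [mul_comm]
  exact (Nat.coprime_mul_left_add_left 1 K n).2 (Nat.coprime_one_left K)

theorem Nat.eq_of_mul_eq_mul_of_coprime {K N p q : ℕ} (hcop : Nat.Coprime N K)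
    (h : K * q = p * N) (hq : 0 < q) (hq2 : q < 2 * N) : q = N :=
  Nat.eq_of_dvd_of_lt_two_mul hq.ne' (hcop.dvd_of_dvd_mul_left ⟨p, by rw [h, mul_comm]⟩) hq2

theorem integrality_m2_general (K N : ℕ) (hN : N = 4 * K + 1)
    (p₁ p₂ q₁ q₂ : ℕ) (hq₁ : 0 < q₁) (hq₂ : 0 < q₂)
    (hp : p₁ + p₂ = 2 * K) (hq : q₁ + q₂ = 2 * N)
    (h₁ : (p₁ : ℝ) / q₁ ≥ (K : ℝ) / N)
    (h₂ : (p₂ : ℝ) / q₂ ≥ (K : ℝ) / N) :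
    p₁ = K ∧ p₂ = K ∧ q₁ = N ∧ q₂ = N := by
  have hN0 : 0 < N := by omega
  obtain ⟨e₁, e₂⟩ : K * q₁ = p₁ * N ∧ K * q₂ = p₂ * N :=
    (add_eq_add_iff_eq_and_eq (Nat.mul_le_mul_of_cast_div_le_div hN0 hq₁ h₁)
      (Nat.mul_le_mul_of_cast_div_le_div hN0 hq₂ h₂)).1
      (by rw [← mul_add, ← add_mul, hp, hq]; ring)
  have hcop : Nat.Coprime N K := hN ▸ Nat.coprime_mul_add_one_left 4 K
  have hq₁N : q₁ = N := Nat.eq_of_mul_eq_mul_of_coprime hcop e₁ hq₁ (by omega)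
  have hq₂N : q₂ = N := Nat.eq_of_mul_eq_mul_of_coprime hcop e₂ hq₂ (by omega)
  subst hq₁N hq₂N
  exact ⟨(Nat.eq_of_mul_eq_mul_right hN0 e₁).symm, (Nat.eq_of_mul_eq_mul_right hN0 e₂).symm,
    rfl, rfl⟩

/-- Integrality step in the reduction of partition to fractional partition for `m = 2`:
with `N = 4K+1`, if nonnegative integers `p₁, p₂` and positive integers `q₁, q₂` satisfy
`p₁+p₂ = 2K`, `q₁+q₂ = 2N`, and `p_j/q_j ≥ K/N` for `j = 1,2`, then `p₁ = p₂ = K` and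
`q₁ = q₂ = N`. -/
theorem integrality_m2 (K N : ℕ) (hK : 0 < K) (hN : N = 4 * K + 1)
    (p₁ p₂ q₁ q₂ : ℕ) (hq₁ : 0 < q₁) (hq₂ : 0 < q₂)
    (hp : p₁ + p₂ = 2 * K) (hq : q₁ + q₂ = 2 * N)
    (h₁ : (p₁ : ℝ) / q₁ ≥ (K : ℝ) / N)
    (h₂ : (p₂ : ℝ) / q₂ ≥ (K : ℝ) / N) :
    p₁ = K ∧ p₂ = K ∧ q₁ = N ∧ q₂ = N :=
  integrality_m2_general K N hN p₁ p₂ q₁ q₂ hq₁ hq₂ hp hq h₁ h₂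
end

section
/- Let m ≥ 2 and K be positive integers, N = 2mK+1, ε' = (−(2mN³+mKN−1) + √((2mN³+mKN−1)² + 8mN³))/(4mN²), and ε = 1/⌈1/ε'⌉. Then ε > 0 and K/N − 1/(mN²) < 2K/(2N+ε) − ε. -/
/-!
`ε'` is half of the positive root `r` of `q(x) = mN²x² + (2mN³+mKN−1)x − 2N`, and
`ε = 1/⌈1/ε'⌉ ≤ ε'`, so `0 < ε < r` and hence `q(ε) < 0`. Clearing the (positive)
denominators, the claimed inequality is exactly `q(ε) < 0`.
-/

section Quadratic

variable {c b d x : ℝ}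

lemma abs_lt_sqrt_sq_add {e : ℝ} (he : 0 < e) : |b| < √(b ^ 2 + e) :=
  (Real.lt_sqrt (abs_nonneg b)).2 (by rw [sq_abs]; linarith)

lemma quadratic_root_pos (hc : 0 < c) (hd : 0 < d) :
    0 < (-b + √(b ^ 2 + 4 * c * d)) / (2 * c) := by
  have hb : |b| < √(b ^ 2 + 4 * c * d) := abs_lt_sqrt_sq_add (by positivity)
  exact div_pos (by linarith [le_abs_self b]) (by positivity)

lemma quadratic_neg_of_nonneg_of_lt_root (hc : 0 < c) (hd : 0 < d) (hx0 : 0 ≤ x)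
    (hx : x < (-b + √(b ^ 2 + 4 * c * d)) / (2 * c)) :
    c * x ^ 2 + b * x - d < 0 := by
  set s := √(b ^ 2 + 4 * c * d)
  have hs : s ^ 2 = b ^ 2 + 4 * c * d := Real.sq_sqrt (by positivity)
  have hbs : |b| < s := abs_lt_sqrt_sq_add (by positivity)
  have hupper : 2 * c * x + b < s := by
    rw [lt_div_iff₀ (by positivity)] at hx
    linarith
  have hlower : -s < 2 * c * x + b := by
    linarith [neg_abs_le b, mul_nonneg (mul_nonneg zero_le_two hc.le) hx0]
  -- `(2cx + b)² − s² = 4c · q(x)`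
  have hsq : (2 * c * x + b) ^ 2 < s ^ 2 := by nlinarith
  nlinarith

end Quadratic

section CeilInv

variable {α : Type*} [Field α] [LinearOrder α] [IsStrictOrderedRing α] [FloorRing α] {x : α}

lemma one_div_ceil_one_div_pos (hx : 0 < x) : 0 < 1 / (⌈1 / x⌉ : α) := by
  have : (0 : α) < ⌈1 / x⌉ := by exact_mod_cast Int.ceil_pos.mpr (one_div_pos.mpr hx)
  positivity

lemma one_div_ceil_one_div_le (hx : 0 < x) : 1 / (⌈1 / x⌉ : α) ≤ x := by
  calc 1 / (⌈1 / x⌉ : α) ≤ 1 / (1 / x) :=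
        one_div_le_one_div_of_le (one_div_pos.mpr hx) (Int.le_ceil _)
    _ = x := one_div_one_div x

end CeilInv

lemma div_sub_one_div_lt_iff {m K N ε : ℝ} (hm : 0 < m) (hN : 0 < N) (hε : 0 < ε) :
    K / N - 1 / (m * N ^ 2) < 2 * K / (2 * N + ε) - ε ↔
      m * N ^ 2 * ε ^ 2 + (2 * m * N ^ 3 + m * K * N - 1) * ε - 2 * N < 0 := by
  have hD : 0 < m * N ^ 2 * (2 * N + ε) := by positivity
  have hdiff : 2 * K / (2 * N + ε) - ε - (K / N - 1 / (m * N ^ 2)) =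
      -(m * N ^ 2 * ε ^ 2 + (2 * m * N ^ 3 + m * K * N - 1) * ε - 2 * N) /
        (m * N ^ 2 * (2 * N + ε)) := by
    field_simp
    ring
  rw [← sub_pos, hdiff, div_pos_iff_of_pos_right hD, neg_pos]

theorem epsilon_choice_general_general (m K N : ℕ) (hm : 2 ≤ m)
    (hN : N = 2 * m * K + 1)
    (ε' ε : ℝ)
    (hε' : ε' = (-(2 * (m : ℝ) * (N : ℝ) ^ 3 + (m : ℝ) * (K : ℝ) * (N : ℝ) - 1)
        + Real.sqrt ((2 * (m : ℝ) * (N : ℝ) ^ 3 + (m : ℝ) * (K : ℝ) * (N : ℝ) - 1) ^ 2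
            + 8 * (m : ℝ) * (N : ℝ) ^ 3)) / (4 * (m : ℝ) * (N : ℝ) ^ 2))
    (hε : ε = 1 / ((⌈1 / ε'⌉ : ℤ) : ℝ)) :
    0 < ε ∧ (K : ℝ) / N - 1 / ((m : ℝ) * (N : ℝ) ^ 2)
      < 2 * (K : ℝ) / (2 * (N : ℝ) + ε) - ε := by
  have hm0 : (0 : ℝ) < m := by exact_mod_cast (by omega : 0 < m)
  have hN0 : (0 : ℝ) < N := by exact_mod_cast (by omega : 0 < N)
  have hc : (0 : ℝ) < m * N ^ 2 := by positivity
  have hd : (0 : ℝ) < 2 * N := by positivity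
  set a : ℝ := 2 * m * N ^ 3 + m * K * N - 1
  set r := (-a + √(a ^ 2 + 4 * (m * N ^ 2) * (2 * N))) / (2 * (m * N ^ 2)) with hr_def
  have hε'r : ε' = r / 2 := by
    rw [hε', hr_def, show (8 * m * N ^ 3 : ℝ) = 4 * (m * N ^ 2) * (2 * N) by ring]
    ring
  have hr : 0 < r := quadratic_root_pos hc hd
  have hε0 : 0 < ε := hε ▸ one_div_ceil_one_div_pos (by linarith)
  have hεr : ε < r := (hε ▸ one_div_ceil_one_div_le (by linarith)).trans_lt (by linarith)
  exact ⟨hε0, (div_sub_one_div_lt_iff hm0 hN0 hε0).2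
    (quadratic_neg_of_nonneg_of_lt_root hc hd hε0.le hεr)⟩

/-- With `N = 2mK+1`, `ε'` half of the positive root of
`mN²ε² + (2mN³+mKN−1)ε − 2N = 0`, and `ε = 1/⌈1/ε'⌉`, one has `ε > 0` and
`K/N − 1/(mN²) < 2K/(2N+ε) − ε`. -/
theorem epsilon_choice_general (m K N : ℕ) (hm : 2 ≤ m) (hK : 0 < K)
    (hN : N = 2 * m * K + 1)
    (ε' ε : ℝ)
    (hε' : ε' = (-(2 * (m : ℝ) * (N : ℝ) ^ 3 + (m : ℝ) * (K : ℝ) * (N : ℝ) - 1)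
        + Real.sqrt ((2 * (m : ℝ) * (N : ℝ) ^ 3 + (m : ℝ) * (K : ℝ) * (N : ℝ) - 1) ^ 2
            + 8 * (m : ℝ) * (N : ℝ) ^ 3)) / (4 * (m : ℝ) * (N : ℝ) ^ 2))
    (hε : ε = 1 / ((⌈1 / ε'⌉ : ℤ) : ℝ)) :
    0 < ε ∧ (K : ℝ) / N - 1 / ((m : ℝ) * (N : ℝ) ^ 2)
      < 2 * (K : ℝ) / (2 * (N : ℝ) + ε) - ε :=
  epsilon_choice_general_general m K N hm hN ε' ε hε' hε
end

section
/- Let K, N, ε be positive real numbers. Let p ≥ 0, q ≥ 1, x ≥ 0, and 0 ≤ s ≤ ε be real numbers. If (p + xK + s)/(q + x(N+ε)) > 2K/(2N+ε), then p/q > 2K/(2N+ε) − ε. -/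
/-- Summands `a / d` with `a ≤ r * d` cannot lift the ratio above `r`, so only the excess `s`
can, and it costs at most `ε` on `p / q`. -/
lemma sub_lt_div_of_lt_add_div_add {r p q a d s ε : ℝ} (hq : 0 < q) (hqd : 0 < q + d)
    (had : a ≤ r * d) (hs : s ≤ ε * q) (h : r < (p + a + s) / (q + d)) : r - ε < p / q := by
  have hmul : r * (q + d) < p + a + s := (lt_div_iff₀ hqd).mp h
  rw [lt_div_iff₀ hq]
  linarith

lemma le_two_mul_div_two_mul_add_mul_add {K N ε : ℝ} (hK : 0 ≤ K) (hden : 0 < 2 * N + ε)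
    (hε : 0 ≤ ε) : K ≤ 2 * K / (2 * N + ε) * (N + ε) := by
  rw [div_mul_eq_mul_div, le_div_iff₀ hden]
  nlinarith

theorem ratio_lower_bound_general_general (K N ε p q x s : ℝ)
    (hK : 0 < K) (hN : 0 < N) (hε : 0 < ε)
    (hq : 1 ≤ q) (hx : 0 ≤ x) (hsε : s ≤ ε)
    (hgt : (p + x * K + s) / (q + x * (N + ε)) > 2 * K / (2 * N + ε)) :
    p / q > 2 * K / (2 * N + ε) - ε := by
  have hbig : K ≤ 2 * K / (2 * N + ε) * (N + ε) :=
    le_two_mul_div_two_mul_add_mul_add hK.le (by linarith) hε.le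
  refine sub_lt_div_of_lt_add_div_add (by linarith) (by positivity) ?_ ?_ hgt
  · rw [mul_left_comm]
    exact mul_le_mul_of_nonneg_left hbig hx
  · exact hsε.trans (le_mul_of_one_le_right hε.le hq)

/-- Converse direction estimate in the 3-partition reduction: if
`(p + xK + s)/(q + x(N+ε)) > 2K/(2N+ε)` with `p ≥ 0`, `q ≥ 1`, `x ≥ 0`, `0 ≤ s ≤ ε`,
then `p/q > 2K/(2N+ε) − ε`. -/
theorem ratio_lower_bound_general (K N ε p q x s : ℝ)
    (hK : 0 < K) (hN : 0 < N) (hε : 0 < ε)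
    (hp : 0 ≤ p) (hq : 1 ≤ q) (hx : 0 ≤ x) (hs0 : 0 ≤ s) (hsε : s ≤ ε)
    (hgt : (p + x * K + s) / (q + x * (N + ε)) > 2 * K / (2 * N + ε)) :
    p / q > 2 * K / (2 * N + ε) - ε :=
  ratio_lower_bound_general_general K N ε p q x s hK hN hε hq hx hsε hgt
end

section
/- Let m ≥ 2 be an integer and let d_1,...,d_{3m} be positive integers with d_1+⋯+d_{3m} = mK for a positive integer K and K/4 < d_i < K/2 for every i. Let N = 2mK+1, ε' = (−(2mN³+mKN−1) + √((2mN³+mKN−1)² + 8mN³))/(4mN²), ε = 1/⌈1/ε'⌉, and δ = ε/(mN−3m). Define rational families A, B indexed by {1,...,m(N+1)}: A consists of d_1,...,d_{3m}, then δ repeated mN−3m times, then K repeated m times; B consists of 1 repeated mN times, then N+ε repeated m times. Then there exists a partition of {1,...,3m} into m pairwise disjoint subsets D_1,...,D_m with Σ_{i∈D_j} d_i = K for every j if and only if there exists a partition of {1,...,m(N+1)} into m pairwise disjoint nonempty subsets I_1,...,I_m with union {1,...,m(N+1)} such that (Σ_{i∈I_j} A_i)/(Σ_{i∈I_j} B_i)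 = (2K+ε/m)/(2N+ε) for every j = 1,...,m. -/
/-!
A part `I` of a fractional partition of `(A, B)` is described by four numbers: the sum `S` of
the `d_i` it contains, the numbers `s` and `t` of its indices carrying a `d_i` resp. a `δ`, and
the number `k` of its indices carrying a `K`. Put `q = ⌈1/ε'⌉`, so that `ε = 1/q` and
`δ = ε/(m(N-3))`; clearing denominators in the ratio condition of `I` gives a polynomial identity
in `q` whose low coefficients are smaller than `q`, because the choice of `ε'` makes
`q > 2mN²`. Comparing coefficients yields `s + t = Nk` and `S = Kk` with `k ≥ 1`; as there are only `m` copies of `K`, every part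
has `k = 1`, so its `d_i` sum to `K`.

Conversely, each set of a 3-partition has exactly three elements (as `K/4 < d_i < K/2`), and
completing it by `N - 3` copies of `δ` and one copy of `K` gives a part with numerator
`2K + ε/m` and denominator `2N + ε`.
-/

open Finset

section Partition

variable {α ι : Type*} [Fintype α] [DecidableEq α] [Fintype ι] [DecidableEq ι]

def IsIndexedPartition (P : ι → Finset α) : Prop :=
  (∀ j k, j ≠ k → Disjoint (P j) (P k)) ∧ univ.biUnion P = univ

theorem isIndexedPartition_fiber (f : α → ι) :
    IsIndexedPartition fun j => ({x | f x = j} : Finset α) :=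
  ⟨fun j k hjk => disjoint_filter.2 fun _ _ hj hk => hjk (hj ▸ hk),
    eq_univ_of_forall fun x => mem_biUnion.2 ⟨f x, mem_univ _, by simp⟩⟩

theorem IsIndexedPartition.exists_eq_fiber {P : ι → Finset α} (hP : IsIndexedPartition P) :
    ∃ f : α → ι, ∀ j, P j = ({x | f x = j} : Finset α) := by
  have hmem (x : α) : ∃ j, x ∈ P j := by
    simpa using (hP.2.symm ▸ mem_univ x : x ∈ univ.biUnion P)
  choose f hf using hmem
  refine ⟨f, fun j => ext fun x => ?_⟩
  simp only [mem_filter, mem_univ, true_and]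
  refine ⟨fun hx => ?_, fun h => h ▸ hf x⟩
  by_contra hne
  exact disjoint_left.1 (hP.1 _ _ hne) (hf x) hx

end Partition

def blockFun {α : Type*} {M : ℕ} (a b : ℕ) (f : Fin a → α) (u v : α) (x : Fin M) : α :=
  if h : x.val < a then f ⟨x, h⟩ else if x.val < b then u else v

theorem sum_blockFun {α : Type*} [AddCommMonoid α] {M a b : ℕ} (hab : a ≤ b) (haM : a ≤ M)
    (f : Fin a → α) (u v : α) (I : Finset (Fin M)) :
    ∑ x ∈ I, blockFun a b f u v x = ∑ i with Fin.castLE haM i ∈ I, f i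
      + #{x ∈ I | a ≤ x.val ∧ x.val < b} • u + #{x ∈ I | b ≤ x.val} • v := by
  rw [← sum_filter_add_sum_filter_not I (fun x => x.val < a),
    ← sum_filter_add_sum_filter_not {x ∈ I | ¬ x.val < a} (fun x => x.val < b), add_assoc]
  congr 1
  · refine (sum_nbij (Fin.castLE haM) ?_ ?_ ?_ ?_).symm
    · simp
    · exact (Fin.castLE_injective haM).injOn
    · intro x hx
      simp only [coe_filter, Set.mem_ofPred_eq] at hx
      exact ⟨⟨x, hx.2⟩, by simpa using hx.1, rfl⟩
    · intro i _
      simp [blockFun]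
  · rw [filter_filter, filter_filter]
    have hmid : ∑ x ∈ I with ¬x.val < a ∧ x.val < b, blockFun a b f u v x
        = #{x ∈ I | a ≤ x.val ∧ x.val < b} • u := by
      rw [← sum_const]
      refine sum_congr (by ext; simp) fun x hx => ?_
      simp only [mem_filter] at hx
      simp [blockFun, hx.2]
    have hlast : ∑ x ∈ I with ¬x.val < a ∧ ¬x.val < b, blockFun a b f u v x
        = #{x ∈ I | b ≤ x.val} • v := by
      rw [← sum_const]
      refine sum_congr (by ext; simp; omega) fun x hx => ?_
      simp only [mem_filter] at hx
      simp [blockFun, show ¬x.val < a by omega, show ¬x.val < b by omega]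
    rw [hmid, hlast]

theorem card_filter_le_and_lt {M : ℕ} (a b : ℕ) (hb : b ≤ M) :
    #{x : Fin M | a ≤ x.val ∧ x.val < b} = b - a := by
  rw [← Nat.card_Ico, ← card_map Fin.valEmbedding]
  congr 1
  ext n
  simp only [mem_map, mem_filter, mem_univ, true_and, Fin.valEmbedding_apply, mem_Ico]
  exact ⟨by rintro ⟨x, hx, rfl⟩; exact hx, fun hn => ⟨⟨n, by omega⟩, hn, rfl⟩⟩

theorem exists_label_extension {a b c m M : ℕ} (f : Fin a → Fin m) (hc : 0 < c)
    (hb : a + m * c = b) (hM : b + m = M) :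
    ∃ g : Fin M → Fin m, (∀ i, g (Fin.castLE (by omega) i) = f i) ∧
      ∀ j, #{x ∈ {x : Fin M | g x = j} | a ≤ x.val ∧ x.val < b} = c ∧
        #{x ∈ {x : Fin M | g x = j} | b ≤ x.val} = 1 := by
  refine ⟨fun x => if h : x.val < a then f ⟨x, h⟩
    else if h' : x.val < b then ⟨(x - a) / c, Nat.div_lt_of_lt_mul (by rw [mul_comm]; omega)⟩
    else ⟨x - b, by omega⟩, fun i => dif_pos i.isLt, fun j => ⟨?_, ?_⟩⟩
  · have hj : (j : ℕ) * c + c ≤ m * c := by nlinarith [j.isLt]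
    calc _ = #{x : Fin M | a + j * c ≤ x.val ∧ x.val < a + j * c + c} := by
          congr 1
          ext x
          simp only [filter_filter, mem_filter, mem_univ, true_and]
          constructor
          · rintro ⟨hx, hax, hxb⟩
            rw [dif_neg (by omega), dif_pos hxb, Fin.ext_iff, Nat.div_eq_iff hc] at hx
            omega
          · intro hx
            refine ⟨?_, by omega, by omega⟩
            rw [dif_neg (by omega), dif_pos (by omega), Fin.ext_iff, Nat.div_eq_iff hc]
            omega
      _ = c := by rw [card_filter_le_and_lt _ _ (by omega)]; omega
  · calc _ = #{x : Fin M | b + j ≤ x.val ∧ x.val < b + j + 1} := by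
          congr 1
          ext x
          simp only [filter_filter, mem_filter, mem_univ, true_and]
          constructor
          · rintro ⟨hx, hbx⟩
            rw [dif_neg (by omega), dif_neg (by omega), Fin.ext_iff, Fin.val_mk] at hx
            omega
          · intro hx
            refine ⟨?_, by omega⟩
            rw [dif_neg (by omega), dif_neg (by omega), Fin.ext_iff, Fin.val_mk]
            omega
      _ = 1 := by rw [card_filter_le_and_lt _ _ (by omega)]; omega

theorem quadratic_root_pos_lt {a b c : ℝ} (ha : 0 < a) (hb : 0 < b) (hc : 0 < c) :
    0 < (-b + √(b ^ 2 + 4 * a * c)) / (2 * a) ∧ (-b + √(b ^ 2 + 4 * a * c)) / (2 * a) < c / b := by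
  have hs : b < √(b ^ 2 + 4 * a * c) := Real.lt_sqrt hb.le |>.2 (by nlinarith)
  have hsq := Real.sq_sqrt (by positivity : 0 ≤ b ^ 2 + 4 * a * c)
  refine ⟨div_pos (by linarith) (by positivity), ?_⟩
  rw [div_lt_div_iff₀ (by positivity) hb]
  nlinarith [mul_pos ha hc]

-- `ε'` is the positive root of `2mN²x² + (2mN³ + mKN - 1)x - N`.
theorem two_mul_sq_lt_ceil_one_div {m K N : ℕ} (hm : 0 < m) (hK : 0 < K) (hN : 0 < N) {ε' : ℝ}
    (hε' : ε' = (-(2 * (m : ℝ) * (N : ℝ) ^ 3 + (m : ℝ) * (K : ℝ) * (N : ℝ) - 1)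
        + Real.sqrt ((2 * (m : ℝ) * (N : ℝ) ^ 3 + (m : ℝ) * (K : ℝ) * (N : ℝ) - 1) ^ 2
            + 8 * (m : ℝ) * (N : ℝ) ^ 3)) / (4 * (m : ℝ) * (N : ℝ) ^ 2)) :
    2 * (m : ℤ) * N ^ 2 < ⌈1 / ε'⌉ := by
  have hmKN : (1 : ℝ) ≤ m * K * N := by
    have : 1 ≤ m * K * N := Nat.one_le_iff_ne_zero.2 (by positivity)
    exact_mod_cast this
  have hb : 0 < (2 * m * N ^ 3 + m * K * N - 1 : ℝ) := by
    have : (0 : ℝ) < 2 * m * N ^ 3 := by positivity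
    linarith
  set b : ℝ := 2 * m * N ^ 3 + m * K * N - 1
  obtain ⟨hpos, hlt⟩ := quadratic_root_pos_lt (a := 2 * m * N ^ 2) (c := N) (by positivity) hb
    (by positivity)
  rw [show (-b + √(b ^ 2 + 4 * (2 * m * N ^ 2) * N)) / (2 * (2 * m * N ^ 2)) = ε' by
    rw [hε']; ring_nf] at hpos hlt
  have hbN : 2 * (m : ℝ) * N ^ 2 ≤ b / N := by
    rw [le_div_iff₀ (by positivity)]; linarith
  have hinv : b / N < 1 / ε' := by
    rw [lt_one_div (by positivity) hpos]; simpa [one_div_div] using hlt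
  exact Int.lt_ceil.2 (by push_cast; linarith)

theorem card_eq_three_of_sum_eq {𝕜 ι : Type*} [Field 𝕜] [LinearOrder 𝕜] [IsStrictOrderedRing 𝕜]
    {s : Finset ι} {d : ι → 𝕜} {K : 𝕜} (hK : 0 < K) (hd : ∀ i ∈ s, K / 4 < d i ∧ d i < K / 2)
    (hs : ∑ i ∈ s, d i = K) : #s = 3 := by
  have hne : s.Nonempty := nonempty_iff_ne_empty.2 fun h => by simp [h] at hs; linarith
  have hlow : #s * (K / 4) < K := by
    simpa [hs] using sum_lt_sum_of_nonempty hne fun i hi => (hd i hi).1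
  have hup : K < #s * (K / 2) := by
    simpa [hs] using sum_lt_sum_of_nonempty hne fun i hi => (hd i hi).2
  have h4 : (#s : 𝕜) < 4 := by nlinarith
  have h2 : (2 : 𝕜) < #s := by nlinarith
  have : #s < 4 := by exact_mod_cast h4
  have : 2 < #s := by exact_mod_cast h2
  omega

theorem eq_zero_of_mul_add_eq_zero {q a c : ℤ} (hc : |c| < q) (h : q * a + c = 0) :
    a = 0 ∧ c = 0 := by
  have hc0 : c = 0 := Int.eq_zero_of_abs_lt_dvd ⟨-a, by linarith⟩ hc
  refine ⟨?_, hc0⟩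
  have hq : q ≠ 0 := by have := abs_nonneg c; omega
  simpa [hc0, hq] using h

/- The difference of the two sides is a polynomial in `q` whose two lowest coefficients are
smaller than `q` in absolute value, so they vanish one after the other: the constant one gives
`t = (N - 3)k`, then the linear and quadratic ones give `mS + (N - mK)k = s + t` and
`NS = K(s + t)`. -/
theorem part_counts_of_cross_mul_eq {m K N q S s t k : ℤ} (hm : 0 < m) (hN : 3 < N)
    (hmKN : m * K < N) (hq : 2 * m * N ^ 2 < q) (hS : 0 ≤ S ∧ S ≤ m * K)
    (hs : 0 ≤ s ∧ s ≤ 3 * m) (ht : 0 ≤ t ∧ t ≤ m * (N + 1)) (hk : 0 ≤ k ∧ k ≤ m)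
    (h : (q * m * (N - 3) * (S + k * K) + t) * (2 * N * q + 1)
      = (2 * K * q * m + 1) * (N - 3) * (q * (s + t + k * N) + k)) :
    s + t = N * k ∧ S = K * k := by
  have hmN : m * N < q := by nlinarith
  have hq0 : 0 < q := by nlinarith
  obtain ⟨-, hunits⟩ := eq_zero_of_mul_add_eq_zero (q := q) (c := t - (N - 3) * k)
    (a := m * (N - 3) * (S + k * K) * (2 * N * q + 1) + 2 * N * t
      - 2 * K * m * (N - 3) * (q * (s + t + k * N) + k) - (N - 3) * (s + t + k * N))
    (abs_sub_lt_iff.2 ⟨by nlinarith, by nlinarith⟩) (by linear_combination h)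
  obtain rfl := eq_of_sub_eq_zero hunits
  have h' : (N - 3) * q * (q * (2 * m * (N * S - K * (s + (N - 3) * k)))
      + (m * S - m * K * k + N * k - (s + (N - 3) * k))) = 0 := by linear_combination h
  obtain ⟨hsq, hc⟩ := eq_zero_of_mul_add_eq_zero (q := q)
    (abs_sub_lt_iff.2 ⟨by nlinarith, by nlinarith⟩)
    ((mul_eq_zero.1 h').resolve_left (mul_pos (by omega) hq0).ne')
  have hNS : N * S = K * (s + (N - 3) * k) := by
    linarith [(mul_eq_zero.1 hsq).resolve_left (by omega)]
  have hSk : S = K * k := by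
    have : (N - m * K) * (S - K * k) = 0 := by linear_combination hNS - K * hc
    linarith [(mul_eq_zero.1 this).resolve_left (by omega)]
  exact ⟨by linear_combination -hc + m * hSk, hSk⟩

theorem part_counts_of_ratio_eq {m K N S s t k : ℕ} {q : ℤ} (hm : 0 < m) (hN : 3 < N)
    (hmKN : m * K < N) (hq : 2 * (m : ℤ) * N ^ 2 < q) (hS : S ≤ m * K) (hs : s ≤ 3 * m)
    (ht : t ≤ m * (N + 1)) (hk : k ≤ m)
    (h : ((S : ℚ) + t * (1 / q / (m * N - 3 * m)) + k * K) / (s + t + k * (N + 1 / q))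
      = (2 * K + 1 / q / m) / (2 * N + 1 / q)) :
    0 < k ∧ S = K * k := by
  have hq0 : (0 : ℚ) < q := by
    have : (0 : ℤ) < q := lt_of_le_of_lt (by positivity) hq
    exact_mod_cast this
  have hm' : (0 : ℚ) < m := by exact_mod_cast hm
  have hN3 : (N - 3 : ℚ) ≠ 0 := by
    have : (3 : ℚ) < N := by exact_mod_cast hN
    linarith
  -- an empty sum of `B`s would make the left side `0`, since `x / 0 = 0`
  have hden : (s + t + k * (N + 1 / q) : ℚ) ≠ 0 := by
    intro h0
    rw [h0, div_zero] at h
    exact (by positivity : (0 : ℚ) < (2 * K + 1 / q / m) / (2 * N + 1 / q)).ne h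
  rw [div_eq_div_iff hden (by positivity)] at h
  field_simp at h
  obtain ⟨hst, hSk⟩ := part_counts_of_cross_mul_eq (m := m) (K := K) (N := N) (S := S) (s := s)
    (t := t) (k := k) (by exact_mod_cast hm) (by exact_mod_cast hN) (by exact_mod_cast hmKN) hq
    ⟨by positivity, by exact_mod_cast hS⟩ ⟨by positivity, by exact_mod_cast hs⟩
    ⟨by positivity, by exact_mod_cast ht⟩ ⟨by positivity, by exact_mod_cast hk⟩
    (by qify; linear_combination h)
  refine ⟨Nat.pos_of_ne_zero fun hk0 => hden ?_, by exact_mod_cast hSk⟩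
  have : (s : ℤ) + t = 0 := by simpa [hk0] using hst
  simp [hk0, show s = 0 by omega, show t = 0 by omega]

def reductionA (m K N : ℕ) (ε : ℚ) (d : Fin (3 * m) → ℕ) : Fin (m * (N + 1)) → ℚ :=
  blockFun (3 * m) (m * N) (fun i => (d i : ℚ)) (ε / (m * N - 3 * m)) K

def reductionB (m N : ℕ) (ε : ℚ) : Fin (m * (N + 1)) → ℚ :=
  blockFun (3 * m) (m * N) 1 1 (N + ε)

section Reduction

variable {m K N : ℕ} {d : Fin (3 * m) → ℕ}

theorem exists_ratio_partition_of_threePartition (ε : ℚ) (hK : 0 < K) (hN : 3 < N)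
    (hd : ∀ i, (K : ℚ) / 4 < d i ∧ (d i : ℚ) < K / 2) {D : Fin m → Finset (Fin (3 * m))}
    (hD : IsIndexedPartition D) (hDsum : ∀ j, ∑ i ∈ D j, d i = K) :
    ∃ I : Fin m → Finset (Fin (m * (N + 1))), (∀ j, (I j).Nonempty) ∧ IsIndexedPartition I ∧
      ∀ j, (∑ x ∈ I j, reductionA m K N ε d x) / (∑ x ∈ I j, reductionB m N ε x)
        = (2 * K + ε / m) / (2 * N + ε) := by
  obtain ⟨f, hf⟩ := hD.exists_eq_fiber
  simp only [hf] at hDsum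
  have h3m : 3 * m + m * (N - 3) = m * N := by zify [hN.le]; ring
  obtain ⟨g, hgf, hcount⟩ :=
    exists_label_extension f (c := N - 3) (M := m * (N + 1)) (by omega) h3m (by ring)
  refine ⟨fun j => {x | g x = j}, fun j => ?_, isIndexedPartition_fiber g, fun j => ?_⟩
  · exact (card_pos.1 ((hcount j).2 ▸ one_pos)).mono (filter_subset _ _)
  have h3M : 3 * m ≤ m * (N + 1) := by rw [mul_add_one]; omega
  have hcard : #{i | f i = j} = 3 := card_eq_three_of_sum_eq (K := (K : ℚ)) (by positivity)
    (fun i _ => hd i) (by exact_mod_cast hDsum j)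
  rw [reductionA, reductionB, sum_blockFun (by omega) h3M, sum_blockFun (by omega) h3M]
  simp only [mem_filter, mem_univ, true_and, hgf, (hcount j).1, (hcount j).2, ← Nat.cast_sum,
    hDsum, Pi.one_apply, sum_const, hcard, nsmul_eq_mul, Nat.cast_sub hN.le]
  have hm : (m : ℚ) ≠ 0 := by have := j.pos; positivity
  have hN3 : (N : ℚ) - 3 ≠ 0 := by
    have : (3 : ℚ) < N := by exact_mod_cast hN
    linarith
  rw [show (m * N - 3 * m : ℚ) = m * (N - 3) by ring]
  field_simp
  ring

theorem threePartition_of_ratio_eq {q : ℤ} (hm : 0 < m) (hN : 3 < N) (hmKN : m * K < N)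
    (hq : 2 * (m : ℤ) * N ^ 2 < q) (hdsum : ∑ i, d i = m * K)
    {I : Fin m → Finset (Fin (m * (N + 1)))} (hI : IsIndexedPartition I)
    (hrat : ∀ j, (∑ x ∈ I j, reductionA m K N (1 / q) d x)
      / (∑ x ∈ I j, reductionB m N (1 / q) x) = (2 * K + 1 / q / m) / (2 * N + 1 / q)) :
    ∃ D : Fin m → Finset (Fin (3 * m)), IsIndexedPartition D ∧ ∀ j, ∑ i ∈ D j, d i = K := by
  obtain ⟨g, hg⟩ := hI.exists_eq_fiber
  have h3mN : 3 * m ≤ m * N := by nlinarith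
  have h3M : 3 * m ≤ m * (N + 1) := by nlinarith
  set k : Fin m → ℕ := fun j => #{x | g x = j ∧ m * N ≤ x.val}
  have hk_sum : ∑ j, k j = m := by
    calc ∑ j, k j = #{x : Fin (m * (N + 1)) | m * N ≤ x.val} := by
          rw [card_eq_sum_card_fiberwise (f := g) (t := univ) (by simp)]
          simp only [k, filter_filter, and_comm]
      _ = #{x : Fin (m * (N + 1)) | m * N ≤ x.val ∧ x.val < m * (N + 1)} := by
          simp only [Fin.is_lt, and_true]
      _ = m := by rw [card_filter_le_and_lt _ _ le_rfl, mul_add_one, add_tsub_cancel_left]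
  have hcounts (j : Fin m) : 0 < k j ∧ ∑ i with g (Fin.castLE h3M i) = j, d i = K * k j := by
    have h := hrat j
    rw [hg, reductionA, reductionB, sum_blockFun h3mN h3M, sum_blockFun h3mN h3M] at h
    simp only [mem_filter, mem_univ, true_and, filter_filter, ← Nat.cast_sum, Pi.one_apply,
      sum_const, nsmul_eq_mul, mul_one] at h
    refine part_counts_of_ratio_eq hm hN hmKN hq ?_ ?_ ?_ ?_ h
    · exact hdsum ▸ sum_le_sum_of_subset (subset_univ _)
    · exact (card_le_univ _).trans_eq (Fintype.card_fin _)
    · exact (card_le_univ _).trans_eq (Fintype.card_fin _)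
    · exact hk_sum ▸ single_le_sum (fun _ _ => Nat.zero_le _) (mem_univ j)
  have hk (j : Fin m) : k j = 1 :=
    ((sum_eq_sum_iff_of_le (f := fun _ => 1) (g := k) fun j _ => (hcounts j).1).1
      (by simp [hk_sum]) j (mem_univ j)).symm
  exact ⟨fun j => {i | g (Fin.castLE h3M i) = j}, isIndexedPartition_fiber _,
    fun j => by simpa [hk j] using (hcounts j).2⟩

end Reduction

theorem threePartition_reduces_to_FP_general (m K : ℕ) (hm : 2 ≤ m) (hK : 0 < K)
    (d : Fin (3 * m) → ℕ)
    (hdsum : ∑ i, d i = m * K)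
    (hdbound : ∀ i, (K : ℚ) / 4 < (d i : ℚ) ∧ (d i : ℚ) < (K : ℚ) / 2)
    (N : ℕ) (hN : N = 2 * m * K + 1)
    (ε' : ℝ)
    (hε' : ε' = (-(2 * (m : ℝ) * (N : ℝ) ^ 3 + (m : ℝ) * (K : ℝ) * (N : ℝ) - 1)
        + Real.sqrt ((2 * (m : ℝ) * (N : ℝ) ^ 3 + (m : ℝ) * (K : ℝ) * (N : ℝ) - 1) ^ 2
            + 8 * (m : ℝ) * (N : ℝ) ^ 3)) / (4 * (m : ℝ) * (N : ℝ) ^ 2))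
    (ε : ℚ) (hε : ε = 1 / ((⌈1 / ε'⌉ : ℤ) : ℚ))
    (δ : ℚ) (hδ : δ = ε / ((m : ℚ) * (N : ℚ) - 3 * (m : ℚ)))
    (A B : Fin (m * (N + 1)) → ℚ)
    (hA : ∀ i : Fin (m * (N + 1)),
      A i = if h : (i : ℕ) < 3 * m then (d ⟨(i : ℕ), h⟩ : ℚ)
        else if (i : ℕ) < m * N then δ
        else (K : ℚ))
    (hB : ∀ i : Fin (m * (N + 1)),
      B i = if (i : ℕ) < m * N then 1 else (N : ℚ) + ε) :
    (∃ D : Fin m → Finset (Fin (3 * m)),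
        (∀ j k, j ≠ k → Disjoint (D j) (D k)) ∧
        (Finset.univ : Finset (Fin m)).biUnion D = Finset.univ ∧
        ∀ j, ∑ i ∈ D j, d i = K)
      ↔ ∃ I : Fin m → Finset (Fin (m * (N + 1))),
          (∀ j, (I j).Nonempty) ∧
          (∀ j k, j ≠ k → Disjoint (I j) (I k)) ∧
          (Finset.univ : Finset (Fin m)).biUnion I = Finset.univ ∧
          ∀ j, (∑ i ∈ I j, A i) / (∑ i ∈ I j, B i)
            = (2 * (K : ℚ) + ε / (m : ℚ)) / (2 * (N : ℚ) + ε) := by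
  have hN3 : 3 < N := by nlinarith
  have hmKN : m * K < N := by nlinarith
  have h3mN : 3 * m ≤ m * N := by nlinarith
  obtain rfl : A = reductionA m K N ε d := funext fun i => by rw [hA, hδ]; rfl
  obtain rfl : B = reductionB m N ε := funext fun i => by
    rw [hB, reductionB, blockFun]; split_ifs <;> first | rfl | omega
  constructor
  · rintro ⟨D, hDdisj, hDcov, hDsum⟩
    obtain ⟨I, hIne, ⟨hIdisj, hIcov⟩, hI⟩ :=
      exists_ratio_partition_of_threePartition ε hK hN3 hdbound ⟨hDdisj, hDcov⟩ hDsum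
    exact ⟨I, hIne, hIdisj, hIcov, hI⟩
  · rintro ⟨I, -, hIdisj, hIcov, hI⟩
    have hq := two_mul_sq_lt_ceil_one_div (by omega) hK (by omega) hε'
    subst hε
    obtain ⟨D, ⟨hDdisj, hDcov⟩, hD⟩ :=
      threePartition_of_ratio_eq (by omega) hN3 hmKN hq hdsum ⟨hIdisj, hIcov⟩ hI
    exact ⟨D, hDdisj, hDcov, hD⟩

/-- Reduction of 3-partition to fractional partition: with `N = 2mK+1`,
`ε = 1/⌈1/ε'⌉` (for the explicit `ε'`), `δ = ε/(mN−3m)`, and the rational families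
`A, B` indexed by `Fin (m(N+1))` given by
`A = (d_1,...,d_{3m}, δ,...,δ (mN−3m times), K,...,K (m times))` and
`B = (1,...,1 (mN times), N+ε,...,N+ε (m times))`, the `d_i` admit a 3-partition into
`m` groups each summing to `K` iff `Fin (m(N+1))` splits into `m` pairwise disjoint
nonempty sets covering everything, on each of which `(∑ A)/(∑ B) = (2K+ε/m)/(2N+ε)`. -/
theorem threePartition_reduces_to_FP (m K : ℕ) (hm : 2 ≤ m) (hK : 0 < K)
    (d : Fin (3 * m) → ℕ) (hd : ∀ i, 0 < d i)
    (hdsum : ∑ i, d i = m * K)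
    (hdbound : ∀ i, (K : ℚ) / 4 < (d i : ℚ) ∧ (d i : ℚ) < (K : ℚ) / 2)
    (N : ℕ) (hN : N = 2 * m * K + 1)
    (ε' : ℝ)
    (hε' : ε' = (-(2 * (m : ℝ) * (N : ℝ) ^ 3 + (m : ℝ) * (K : ℝ) * (N : ℝ) - 1)
        + Real.sqrt ((2 * (m : ℝ) * (N : ℝ) ^ 3 + (m : ℝ) * (K : ℝ) * (N : ℝ) - 1) ^ 2
            + 8 * (m : ℝ) * (N : ℝ) ^ 3)) / (4 * (m : ℝ) * (N : ℝ) ^ 2))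
    (ε : ℚ) (hε : ε = 1 / ((⌈1 / ε'⌉ : ℤ) : ℚ))
    (δ : ℚ) (hδ : δ = ε / ((m : ℚ) * (N : ℚ) - 3 * (m : ℚ)))
    (A B : Fin (m * (N + 1)) → ℚ)
    (hA : ∀ i : Fin (m * (N + 1)),
      A i = if h : (i : ℕ) < 3 * m then (d ⟨(i : ℕ), h⟩ : ℚ)
        else if (i : ℕ) < m * N then δ
        else (K : ℚ))
    (hB : ∀ i : Fin (m * (N + 1)),
      B i = if (i : ℕ) < m * N then 1 else (N : ℚ) + ε) :
    (∃ D : Fin m → Finset (Fin (3 * m)),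
        (∀ j k, j ≠ k → Disjoint (D j) (D k)) ∧
        (Finset.univ : Finset (Fin m)).biUnion D = Finset.univ ∧
        ∀ j, ∑ i ∈ D j, d i = K)
      ↔ ∃ I : Fin m → Finset (Fin (m * (N + 1))),
          (∀ j, (I j).Nonempty) ∧
          (∀ j k, j ≠ k → Disjoint (I j) (I k)) ∧
          (Finset.univ : Finset (Fin m)).biUnion I = Finset.univ ∧
          ∀ j, (∑ i ∈ I j, A i) / (∑ i ∈ I j, B i)
            = (2 * (K : ℚ) + ε / (m : ℚ)) / (2 * (N : ℚ) + ε) :=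
  threePartition_reduces_to_FP_general m K hm hK d hdsum hdbound N hN ε' hε' ε hε δ hδ A B hA hB
end
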